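/- Let N = N_A + N_B with 0 < N_A < N, identify C^{2^N} = C^{2^{N_A}} ⊗ C^{2^{N_B}}, and let |b⟩ be a fixed standard (computational) basis vector of C^{2^{N_B}}. Let Π^{(2)} = (I + SWAP)/2 on C^{2^N} ⊗ C^{2^N} and let ρ_f = (1/2)[(Z_0⊗Z_0)Π^{(2)}/Tr((Z_0⊗Z_0)Π^{(2)}) + (Z_1⊗Z_1)Π^{(2)}/Tr((Z_1⊗Z_1)Π^{(2)})], where Z_0 = (I+S)/2, Z_1 = (I−S)/2, S = σ_z^{⊗N}. Then the partial inner products satisfy: Tr(⟨b|⊗⟨b| Π^{(2)} |b⟩⊗|b⟩) / Tr(Π^{(2)}) = 2^{N_A}(2^{N_A}+1) / (2^N(2^N+1)), and Tr(⟨b|⊗⟨b| ρ_f |b⟩⊗|b⟩) = 2^{N_A}(2^{N_A}+2) / (2^N(2^N+2)). Here ⟨b|⊗⟨b| M |b⟩⊗|b⟩ denotes the operator on (C^{2^{N_A}})^{⊗2} obtained by contracting M on both B-factors with |b⟩. -/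

import Mathlib

/-!
Everything reduces to `Tr((A ⊗ B) · SWAP) = Tr(AB)`, which gives
`Tr((P ⊗ P) Π⁽²⁾) = (Tr(P)² + Tr P)/2` for every idempotent `P`. Contracting both `B`-factors
with `|b⟩` replaces `A ⊗ B` by the tensor product of the diagonal `b`-blocks and `Π⁽²⁾` by its
analogue on the `A`-system. The projectors `Z_s = (I ± S)/2` have `S² = I` and `Tr S = 0`, and
their `b`-blocks have the same shape with `S = σ_z^{⊗N_A}` up to the sign `⟨b|σ_z^{⊗N_B}|b⟩`,
so every trace involved equals `d(d + 2)/8` with `d = 2^N` or `d = 2^{N_A}`.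
-/

open Matrix
open scoped Kronecker

noncomputable section

/-- Index type of the `N`-qubit Hilbert space `ℂ^(2^N)`. -/
abbrev QIdx (N : ℕ) := Fin N → Fin 2

/-- `σ_z^{⊗N}`. -/
def Smat (N : ℕ) : Matrix (QIdx N) (QIdx N) ℂ :=
  Matrix.diagonal fun x => ∏ i, (-1 : ℂ) ^ (x i : ℕ)

/-- Bipartite index: `ℂ^{2^N} = ℂ^{2^{N_A}} ⊗ ℂ^{2^{N_B}}`. -/
abbrev PIdx (NA NB : ℕ) := QIdx NA × QIdx NB

/-- `σ_z^{⊗N} = σ_z^{⊗N_A} ⊗ σ_z^{⊗N_B}` on the bipartite Hilbert space. -/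
def SmatAB (NA NB : ℕ) : Matrix (PIdx NA NB) (PIdx NA NB) ℂ :=
  Smat NA ⊗ₖ Smat NB

/-- `Z_0 = (I + S)/2` and `Z_1 = (I - S)/2` on the bipartite space. -/
def ZprojAB (NA NB : ℕ) (s : Fin 2) : Matrix (PIdx NA NB) (PIdx NA NB) ℂ :=
  (2 : ℂ)⁻¹ • (1 + (-1 : ℂ) ^ (s : ℕ) • SmatAB NA NB)

/-- The flip (SWAP) operator on `ℂ^d ⊗ ℂ^d`. -/
def swapMat (ι : Type*) [DecidableEq ι] : Matrix (ι × ι) (ι × ι) ℂ :=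
  fun p q => if p.1 = q.2 ∧ p.2 = q.1 then 1 else 0

/-- `Π^{(2)} = (I + SWAP)/2` on two copies of the bipartite space. -/
def Pi2AB (NA NB : ℕ) : Matrix (PIdx NA NB × PIdx NA NB) (PIdx NA NB × PIdx NA NB) ℂ :=
  (2 : ℂ)⁻¹ • (1 + swapMat (PIdx NA NB))

/-- `ρ_f`, the second moment of the uniform ensemble of `Z2`-free pure states. -/
def rhoFAB (NA NB : ℕ) : Matrix (PIdx NA NB × PIdx NA NB) (PIdx NA NB × PIdx NA NB) ℂ :=
  (2 : ℂ)⁻¹ •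
    ((Matrix.trace ((ZprojAB NA NB 0 ⊗ₖ ZprojAB NA NB 0) * Pi2AB NA NB))⁻¹ •
        ((ZprojAB NA NB 0 ⊗ₖ ZprojAB NA NB 0) * Pi2AB NA NB) +
     (Matrix.trace ((ZprojAB NA NB 1 ⊗ₖ ZprojAB NA NB 1) * Pi2AB NA NB))⁻¹ •
        ((ZprojAB NA NB 1 ⊗ₖ ZprojAB NA NB 1) * Pi2AB NA NB))

/-- `⟨b|⊗⟨b| M |b⟩⊗|b⟩`: the operator on `(ℂ^{2^{N_A}})^{⊗2}` obtained by contracting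
both `B`-factors of `M` with the computational basis vector `|b⟩`. -/
def contractB {NA NB : ℕ} (b : QIdx NB)
    (M : Matrix (PIdx NA NB × PIdx NA NB) (PIdx NA NB × PIdx NA NB) ℂ) :
    Matrix (QIdx NA × QIdx NA) (QIdx NA × QIdx NA) ℂ :=
  fun p q => M ((p.1, b), (p.2, b)) ((q.1, b), (q.2, b))

section SymmetricProjector

variable {ι κ : Type*} [Fintype ι] [DecidableEq ι] [Fintype κ] [DecidableEq κ]

def symProj (ι : Type*) [DecidableEq ι] : Matrix (ι × ι) (ι × ι) ℂ :=
  (2 : ℂ)⁻¹ • (1 + swapMat ι)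

omit [Fintype ι] in
theorem Pi2AB_eq_symProj (NA NB : ℕ) : Pi2AB NA NB = symProj (PIdx NA NB) := rfl

theorem mul_swapMat_apply (M : Matrix (ι × ι) (ι × ι) ℂ) (p q : ι × ι) :
    (M * swapMat ι) p q = M p q.swap := by
  rw [mul_apply, Finset.sum_eq_single q.swap]
  · simp [swapMat]
  · rintro r - hr
    rw [swapMat, if_neg fun h => hr (Prod.ext h.1 h.2), mul_zero]
  · simp

theorem trace_kronecker_mul_swapMat (A B : Matrix ι ι ℂ) :
    trace ((A ⊗ₖ B) * swapMat ι) = trace (A * B) := by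
  simp only [trace, diag, mul_swapMat_apply]
  simp only [Fintype.sum_prod_type, kroneckerMap_apply, mul_apply, Prod.swap_prod_mk]

theorem trace_kronecker_mul_symProj (A B : Matrix ι ι ℂ) :
    trace ((A ⊗ₖ B) * symProj ι) = 2⁻¹ * (trace A * trace B + trace (A * B)) := by
  rw [symProj, mul_smul_comm, mul_add, mul_one, trace_smul, trace_add, trace_kronecker,
    trace_kronecker_mul_swapMat, smul_eq_mul]

theorem trace_kronecker_mul_symProj_of_isIdempotentElem {P : Matrix ι ι ℂ}
    (hP : IsIdempotentElem P) :
    trace ((P ⊗ₖ P) * symProj ι) = 2⁻¹ * (trace P ^ 2 + trace P) := by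
  rw [trace_kronecker_mul_symProj, hP.eq, sq]

theorem submatrix_kronecker_mul_swapMat (A B : Matrix ι ι ℂ) (f : κ → ι) :
    ((A ⊗ₖ B) * swapMat ι).submatrix (Prod.map f f) (Prod.map f f) =
      (A.submatrix f f ⊗ₖ B.submatrix f f) * swapMat κ := by
  ext p q
  simp only [submatrix_apply, mul_swapMat_apply]
  rfl

theorem submatrix_kronecker_mul_symProj (A B : Matrix ι ι ℂ) (f : κ → ι) :
    ((A ⊗ₖ B) * symProj ι).submatrix (Prod.map f f) (Prod.map f f) =
      (A.submatrix f f ⊗ₖ B.submatrix f f) * symProj κ := by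
  simp only [symProj, mul_smul_comm, mul_add, mul_one, ← submatrix_kronecker_mul_swapMat]
  rfl

theorem trace_symProj : trace (symProj ι) = 2⁻¹ * ((Fintype.card ι : ℂ) ^ 2 + Fintype.card ι) := by
  rw [← one_mul (symProj ι), ← one_kronecker_one,
    trace_kronecker_mul_symProj_of_isIdempotentElem IsIdempotentElem.one, trace_one]

end SymmetricProjector

section SignProjector

variable {n : Type*} [Fintype n] [DecidableEq n]

theorem isIdempotentElem_half_one_add_smul {A : Type*} [Ring A] [Algebra ℂ A] {s : A}
    (hs : s * s = 1) {c : ℂ} (hc : c * c = 1) : IsIdempotentElem ((2 : ℂ)⁻¹ • (1 + c • s)) := by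
  rw [IsIdempotentElem, smul_mul_smul, add_mul, mul_add, mul_add, smul_mul_smul, hs, hc]
  simp only [one_mul, mul_one, one_smul]
  module

theorem trace_half_one_add_smul {S : Matrix n n ℂ} (hS : trace S = 0) (c : ℂ) :
    trace ((2 : ℂ)⁻¹ • (1 + c • S)) = 2⁻¹ * (Fintype.card n : ℂ) := by
  rw [trace_smul, trace_add, trace_smul, hS, trace_one, smul_zero, add_zero, smul_eq_mul]

theorem trace_half_one_add_smul_kronecker_mul_symProj {S : Matrix n n ℂ} (hS : S * S = 1)
    (htr : trace S = 0) {c : ℂ} (hc : c * c = 1) :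
    trace (((2 : ℂ)⁻¹ • (1 + c • S)) ⊗ₖ ((2 : ℂ)⁻¹ • (1 + c • S)) * symProj n) =
      (Fintype.card n : ℂ) * (Fintype.card n + 2) / 8 := by
  rw [trace_kronecker_mul_symProj_of_isIdempotentElem
    (isIdempotentElem_half_one_add_smul hS hc), trace_half_one_add_smul htr]
  ring

end SignProjector

section Qubits

def paritySign {N : ℕ} (x : QIdx N) : ℂ := ∏ i, (-1 : ℂ) ^ (x i : ℕ)

theorem neg_one_pow_mul_self (k : ℕ) : (-1 : ℂ) ^ k * (-1 : ℂ) ^ k = 1 := by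
  rw [← mul_pow, neg_one_mul, neg_neg, one_pow]

theorem paritySign_mul_self {N : ℕ} (x : QIdx N) : paritySign x * paritySign x = 1 := by
  rw [paritySign, ← Finset.prod_mul_distrib]
  exact Finset.prod_eq_one fun i _ => neg_one_pow_mul_self _

theorem card_QIdx (N : ℕ) : Fintype.card (QIdx N) = 2 ^ N := by simp

theorem Smat_eq_diagonal (N : ℕ) : Smat N = diagonal paritySign := rfl

theorem Smat_mul_self (N : ℕ) : Smat N * Smat N = 1 := by
  rw [Smat_eq_diagonal, diagonal_mul_diagonal, ← diagonal_one]
  exact congrArg diagonal (funext paritySign_mul_self)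

theorem trace_Smat {N : ℕ} (hN : 0 < N) : trace (Smat N) = 0 := by
  rw [Smat, trace_diagonal, ← Fintype.prod_sum fun (_ : Fin N) (j : Fin 2) => (-1 : ℂ) ^ (j : ℕ),
    Fin.sum_univ_two]
  simp [zero_pow hN.ne']

theorem SmatAB_mul_self (NA NB : ℕ) : SmatAB NA NB * SmatAB NA NB = 1 := by
  rw [SmatAB, ← mul_kronecker_mul, Smat_mul_self, Smat_mul_self, one_kronecker_one]

theorem trace_SmatAB {NA : ℕ} (hA : 0 < NA) (NB : ℕ) : trace (SmatAB NA NB) = 0 := by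
  rw [SmatAB, trace_kronecker, trace_Smat hA, zero_mul]

theorem SmatAB_submatrix (NA : ℕ) {NB : ℕ} (b : QIdx NB) :
    (SmatAB NA NB).submatrix (·, b) (·, b) = paritySign b • Smat NA := by
  ext a a'
  simp [SmatAB, Smat_eq_diagonal, mul_comm]

theorem ZprojAB_submatrix (NA : ℕ) {NB : ℕ} (s : Fin 2) (b : QIdx NB) :
    (ZprojAB NA NB s).submatrix (·, b) (·, b) =
      (2 : ℂ)⁻¹ • (1 + ((-1 : ℂ) ^ (s : ℕ) * paritySign b) • Smat NA) := by
  change (2 : ℂ)⁻¹ • ((1 : Matrix (PIdx NA NB) (PIdx NA NB) ℂ).submatrix _ _ +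
    (-1 : ℂ) ^ (s : ℕ) • (SmatAB NA NB).submatrix (·, b) (·, b)) = _
  rw [submatrix_one _ (Prod.mk_left_injective b), SmatAB_submatrix, smul_smul]

theorem contractB_eq_submatrix {NA NB : ℕ} (b : QIdx NB)
    (M : Matrix (PIdx NA NB × PIdx NA NB) (PIdx NA NB × PIdx NA NB) ℂ) :
    contractB b M = M.submatrix (Prod.map (·, b) (·, b)) (Prod.map (·, b) (·, b)) := rfl

theorem contractB_add {NA NB : ℕ} (b : QIdx NB)
    (M M' : Matrix (PIdx NA NB × PIdx NA NB) (PIdx NA NB × PIdx NA NB) ℂ) :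
    contractB b (M + M') = contractB b M + contractB b M' := rfl

theorem contractB_smul {NA NB : ℕ} (b : QIdx NB) (c : ℂ)
    (M : Matrix (PIdx NA NB × PIdx NA NB) (PIdx NA NB × PIdx NA NB) ℂ) :
    contractB b (c • M) = c • contractB b M := rfl

theorem contractB_kronecker_mul_Pi2AB {NA NB : ℕ} (b : QIdx NB)
    (X Y : Matrix (PIdx NA NB) (PIdx NA NB) ℂ) :
    contractB b ((X ⊗ₖ Y) * Pi2AB NA NB) =
      (X.submatrix (·, b) (·, b) ⊗ₖ Y.submatrix (·, b) (·, b)) * symProj (QIdx NA) := by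
  rw [contractB_eq_submatrix, Pi2AB_eq_symProj, submatrix_kronecker_mul_symProj]

theorem contractB_Pi2AB (NA : ℕ) {NB : ℕ} (b : QIdx NB) :
    contractB b (Pi2AB NA NB) = symProj (QIdx NA) := by
  rw [← one_mul (Pi2AB NA NB), ← one_kronecker_one, contractB_kronecker_mul_Pi2AB,
    submatrix_one _ (Prod.mk_left_injective b), one_kronecker_one, one_mul]

theorem trace_ZprojAB_kronecker_mul_Pi2AB {NA : ℕ} (hA : 0 < NA) (NB : ℕ) (s : Fin 2) :
    trace ((ZprojAB NA NB s ⊗ₖ ZprojAB NA NB s) * Pi2AB NA NB) =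
      (2 : ℂ) ^ (NA + NB) * ((2 : ℂ) ^ (NA + NB) + 2) / 8 := by
  rw [Pi2AB_eq_symProj, ZprojAB, trace_half_one_add_smul_kronecker_mul_symProj
    (SmatAB_mul_self NA NB) (trace_SmatAB hA NB) (neg_one_pow_mul_self _)]
  simp [pow_add]

theorem trace_contractB_ZprojAB_kronecker_mul_Pi2AB {NA : ℕ} (hA : 0 < NA) {NB : ℕ}
    (b : QIdx NB) (s : Fin 2) :
    trace (contractB b ((ZprojAB NA NB s ⊗ₖ ZprojAB NA NB s) * Pi2AB NA NB)) =
      (2 : ℂ) ^ NA * ((2 : ℂ) ^ NA + 2) / 8 := by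
  have hc : ((-1 : ℂ) ^ (s : ℕ) * paritySign b) * ((-1 : ℂ) ^ (s : ℕ) * paritySign b) = 1 := by
    rw [mul_mul_mul_comm, neg_one_pow_mul_self, paritySign_mul_self, one_mul]
  rw [contractB_kronecker_mul_Pi2AB, ZprojAB_submatrix, trace_half_one_add_smul_kronecker_mul_symProj
    (Smat_mul_self NA) (trace_Smat hA) hc]
  simp

end Qubits

theorem Z2_protocol_constants_general (NA NB : ℕ) (hA : 0 < NA)
    (b : QIdx NB) :
    Matrix.trace (contractB b (Pi2AB NA NB)) / Matrix.trace (Pi2AB NA NB) =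
      (2 : ℂ) ^ NA * ((2 : ℂ) ^ NA + 1) / ((2 : ℂ) ^ (NA + NB) * ((2 : ℂ) ^ (NA + NB) + 1)) ∧
    Matrix.trace (contractB b (rhoFAB NA NB)) =
      (2 : ℂ) ^ NA * ((2 : ℂ) ^ NA + 2) / ((2 : ℂ) ^ (NA + NB) * ((2 : ℂ) ^ (NA + NB) + 2)) := by
  have hd1 : (2 : ℂ) ^ (NA + NB) + 1 ≠ 0 := by norm_cast
  have hd2 : (2 : ℂ) ^ (NA + NB) + 2 ≠ 0 := by norm_cast
  constructor
  · rw [contractB_Pi2AB, Pi2AB_eq_symProj, trace_symProj, trace_symProj]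
    simp only [Fintype.card_prod, card_QIdx, Nat.cast_pow, Nat.cast_ofNat, ← pow_add]
    field_simp
  · rw [rhoFAB, contractB_smul, contractB_add, contractB_smul, contractB_smul, trace_smul,
      trace_add, trace_smul, trace_smul]
    simp only [trace_ZprojAB_kronecker_mul_Pi2AB hA, trace_contractB_ZprojAB_kronecker_mul_Pi2AB hA,
      smul_eq_mul]
    field_simp
    ring

/-- **Statement 7.** The measurement-protocol constants:
`Tr(⟨b|⊗⟨b| Π^{(2)} |b⟩⊗|b⟩)/Tr(Π^{(2)}) = 2^{N_A}(2^{N_A}+1)/(2^N(2^N+1))` (this is `k₁`) and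
`Tr(⟨b|⊗⟨b| ρ_f |b⟩⊗|b⟩) = 2^{N_A}(2^{N_A}+2)/(2^N(2^N+2))` (this is `k₂`). -/
theorem Z2_protocol_constants (NA NB : ℕ) (hA : 0 < NA) (hB : 0 < NB)
    (b : QIdx NB) :
    Matrix.trace (contractB b (Pi2AB NA NB)) / Matrix.trace (Pi2AB NA NB) =
      (2 : ℂ) ^ NA * ((2 : ℂ) ^ NA + 1) / ((2 : ℂ) ^ (NA + NB) * ((2 : ℂ) ^ (NA + NB) + 1)) ∧
    Matrix.trace (contractB b (rhoFAB NA NB)) =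
      (2 : ℂ) ^ NA * ((2 : ℂ) ^ NA + 2) / ((2 : ℂ) ^ (NA + NB) * ((2 : ℂ) ^ (NA + NB) + 2)) :=
  Z2_protocol_constants_general NA NB hA b
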